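/- Let H be a Hopf algebra over a field k with bijective antipode S, and let P be a right H-comodule algebra via ρ : P → P ⊗ H (written ρ(p) = Σ p⁽⁰⁾ ⊗ p⁽¹⁾). Define Δ_L : P → H ⊗ P by Δ_L(p) = Σ S⁻¹(p⁽¹⁾) ⊗ p⁽⁰⁾, and let ρ₂ : P ⊗ P → P ⊗ P ⊗ H be ρ₂(p ⊗ q) = Σ p⁽⁰⁾ ⊗ q⁽⁰⁾ ⊗ p⁽¹⁾ q⁽¹⁾. Suppose ω : H → P ⊗ P is a k-linear map which is Ad-covariant: ρ₂(ω(h)) = Σ ω(h₍₂₎) ⊗ S(h₍₁₎) h₍₃₎ for all h ∈ H. Then the following two conditions are equivalent: (ii) (Δ_L ⊗ id)(ω(h)) = h ⊗ 1 ⊗ 1 − ε(h) 1 ⊗ 1 ⊗ 1 + Σ h₍₁₎ ⊗ ω(h₍₂₎) for all h ∈ H, where Δ_L is applied to the first tensor factor of ω(h); (iii) (id ⊗ ρ)(ω(h)) = 1 ⊗ 1 ⊗ h − ε(h) 1 ⊗ 1 ⊗ 1 + Σ ω(h₍₁₎) ⊗ h₍₂₎ for all h ∈ H, where ρ is applied to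 the second tensor factor of ω(h). -/

import Mathlib

open TensorProduct

noncomputable section

variable {k H P : Type*} [Field k] [Ring H] [HopfAlgebra k H] [Ring P] [Algebra k P]

/-- `Δ_L(p) = Σ S⁻¹(p⁽¹⁾) ⊗ p⁽⁰⁾`, built from the coaction `ρ` and the inverse `Sinv`
of the antipode. -/
noncomputable def deltaL (Sinv : H →ₗ[k] H) (ρ : P →ₗ[k] P ⊗[k] H) :
    P →ₗ[k] H ⊗[k] P :=
  (TensorProduct.comm k P H).toLinearMap ∘ₗ LinearMap.lTensor P Sinv ∘ₗ ρ

/-- `ρ₂(p ⊗ q) = Σ p⁽⁰⁾ ⊗ q⁽⁰⁾ ⊗ p⁽¹⁾ q⁽¹⁾` on `P ⊗ P`. -/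
noncomputable def rhoTwo (ρ : P →ₗ[k] P ⊗[k] H) :
    P ⊗[k] P →ₗ[k] (P ⊗[k] P) ⊗[k] H :=
  (LinearMap.mul' k H).lTensor (P ⊗[k] P)
    ∘ₗ (TensorProduct.tensorTensorTensorComm k P H P H).toLinearMap
    ∘ₗ TensorProduct.map ρ ρ

/-- `h ↦ Σ h₍₂₎ ⊗ S(h₍₁₎) h₍₃₎` (the right adjoint coaction of `H` on itself). -/
noncomputable def adCoaction : H →ₗ[k] H ⊗[k] H :=
  (LinearMap.mul' k H).lTensor H
    ∘ₗ (TensorProduct.assoc k H H H).toLinearMap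
    ∘ₗ (TensorProduct.comm k H H).toLinearMap.rTensor H
    ∘ₗ (TensorProduct.assoc k H H H).symm.toLinearMap
    ∘ₗ (HopfAlgebra.antipode (R := k) (A := H)).rTensor (H ⊗[k] H)
    ∘ₗ LinearMap.lTensor H (Coalgebra.comul (R := k) (A := H))
    ∘ₗ Coalgebra.comul


set_option maxHeartbeats 1000000
set_option synthInstance.maxHeartbeats 200000

open Coalgebra

section AuxHopf

local notation "S" => HopfAlgebra.antipode (R := k) (A := H)
local notation "Δ" => Coalgebra.comul (R := k) (A := H)
local notation "ε" => Coalgebra.counit (R := k) (A := H)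
local notation "μ" => LinearMap.mul' k H

lemma repr_counit_left {a : H} {ι : Type*} (r : Coalgebra.Repr k a ι) :
    ∑ i ∈ r.index, ε (r.left i) • r.right i = a := by
  have := congrArg (TensorProduct.lid k H) (Coalgebra.sum_counit_tmul_eq r)
  rw [map_sum] at this
  simpa using this

lemma repr_counit_right {a : H} {ι : Type*} (r : Coalgebra.Repr k a ι) :
    ∑ i ∈ r.index, ε (r.right i) • r.left i = a := by
  have := congrArg (TensorProduct.rid k H) (Coalgebra.sum_tmul_counit_eq r)
  rw [map_sum] at this
  simpa using this

lemma antipode_one' : S (1 : H) = 1 := by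
  have := HopfAlgebra.mul_antipode_rTensor_comul_apply (R := k) (A := H) (1 : H)
  simpa [Algebra.TensorProduct.one_def] using this

/-- `χ (v ⊗ w) = v * S w`. -/
noncomputable def chiS : H ⊗[k] H →ₗ[k] H := LinearMap.mul' k H ∘ₗ LinearMap.lTensor H (HopfAlgebra.antipode (R := k))

@[simp] lemma chiS_tmul (v w : H) : chiS (v ⊗ₜ[k] w) = v * S w := by
  simp [chiS]

lemma chiS_comul (v : H) : chiS (Δ v) = algebraMap k H (ε v) := by
  simp [chiS]

/-- `ψ ((y ⊗ z) ⊗ (v ⊗ w)) = (y*v) * (S w * S z)`. -/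
noncomputable def psiH : (H ⊗[k] H) ⊗[k] (H ⊗[k] H) →ₗ[k] H :=
  LinearMap.mul' k H ∘ₗ
    TensorProduct.map (LinearMap.mul' k H)
      (LinearMap.mul' k H ∘ₗ TensorProduct.map (HopfAlgebra.antipode (R := k)) (HopfAlgebra.antipode (R := k)) ∘ₗ (TensorProduct.comm k H H).toLinearMap) ∘ₗ
    (TensorProduct.tensorTensorTensorComm k H H H H).toLinearMap

@[simp] lemma psiH_tmul (y z v w : H) :
    psiH ((y ⊗ₜ[k] z) ⊗ₜ[k] (v ⊗ₜ[k] w)) = (y * v) * (S w * S z) := by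
  simp [psiH]

/-- `π ((x ⊗ y) ⊗ (u ⊗ v)) = S (x*u) * (y*v)`. -/
noncomputable def piH : (H ⊗[k] H) ⊗[k] (H ⊗[k] H) →ₗ[k] H :=
  LinearMap.mul' k H ∘ₗ
    TensorProduct.map (HopfAlgebra.antipode (R := k) ∘ₗ LinearMap.mul' k H) (LinearMap.mul' k H) ∘ₗ
    (TensorProduct.tensorTensorTensorComm k H H H H).toLinearMap

@[simp] lemma piH_tmul (x y u v : H) :
    piH ((x ⊗ₜ[k] y) ⊗ₜ[k] (u ⊗ₜ[k] v)) = S (x * u) * (y * v) := by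
  simp [piH]

/-- `Φ ((x ⊗ (y ⊗ z)) ⊗ (u ⊗ (v ⊗ w))) = S (x*u) * ((y*v) * (S w * S z))`. -/
noncomputable def PhiH : (H ⊗[k] (H ⊗[k] H)) ⊗[k] (H ⊗[k] (H ⊗[k] H)) →ₗ[k] H :=
  LinearMap.mul' k H ∘ₗ
    TensorProduct.map (HopfAlgebra.antipode (R := k) ∘ₗ LinearMap.mul' k H) psiH ∘ₗ
    (TensorProduct.tensorTensorTensorComm k H (H ⊗[k] H) H (H ⊗[k] H)).toLinearMap

lemma PhiH_tmul (x u : H) (c d : H ⊗[k] H) :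
    PhiH ((x ⊗ₜ[k] c) ⊗ₜ[k] (u ⊗ₜ[k] d)) = S (x * u) * psiH (c ⊗ₜ[k] d) := by
  simp [PhiH]

lemma psiH_apply_general (c d : H ⊗[k] H) :
    psiH (c ⊗ₜ[k] d) =
      μ ((LinearMap.lTensor H (LinearMap.mulLeft k (chiS d) ∘ₗ HopfAlgebra.antipode (R := k))) c) := by
  induction c using TensorProduct.induction_on with
  | zero => simp
  | tmul y z =>
    induction d using TensorProduct.induction_on with
    | zero => simp
    | tmul v w => simp [mul_assoc]
    | add d₁ d₂ h₁ h₂ =>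
      rw [tmul_add, map_add, h₁, h₂, map_add]
      simp [LinearMap.mulLeft, add_mul, mul_add, tmul_add]
  | add c₁ c₂ h₁ h₂ =>
    rw [add_tmul, map_add, h₁, h₂, map_add, map_add]

lemma psiH_comul_comul (r r' : H) :
    psiH (Δ r ⊗ₜ[k] Δ r') = (ε r * ε r') • (1 : H) := by
  rw [psiH_apply_general, chiS_comul]
  have : LinearMap.mulLeft k (algebraMap k H (ε r')) ∘ₗ HopfAlgebra.antipode (R := k)
      = ε r' • (HopfAlgebra.antipode (R := k) (A := H)) := by
    ext x; simp [Algebra.smul_def]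
  rw [this, LinearMap.lTensor_smul, LinearMap.smul_apply, LinearMap.map_smul]
  have h2 : μ ((LinearMap.lTensor H (HopfAlgebra.antipode (R := k))) (Δ r)) = algebraMap k H (ε r) :=
    HopfAlgebra.mul_antipode_lTensor_comul_apply r
  rw [h2, Algebra.algebraMap_eq_smul_one, smul_smul, mul_comm (ε r') (ε r)]

lemma piH_mul (c d : H ⊗[k] H) :
    piH (c ⊗ₜ[k] d) = μ ((HopfAlgebra.antipode (R := k)).rTensor H (c * d)) := by
  induction c using TensorProduct.induction_on with
  | zero => simp
  | tmul x y =>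
    induction d using TensorProduct.induction_on with
    | zero => simp
    | tmul u v => simp [Algebra.TensorProduct.tmul_mul_tmul]
    | add d₁ d₂ h₁ h₂ => rw [tmul_add, map_add, h₁, h₂, mul_add, map_add, map_add]
  | add c₁ c₂ h₁ h₂ => rw [add_tmul, map_add, h₁, h₂, add_mul, map_add, map_add]

lemma piH_comul_comul (l l' : H) :
    piH (Δ l ⊗ₜ[k] Δ l') = algebraMap k H (ε (l * l')) := by
  rw [piH_mul, ← Bialgebra.comul_mul, HopfAlgebra.mul_antipode_rTensor_comul_apply]

lemma PhiH_assoc_general (c d : H ⊗[k] H) (z w : H) :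
    PhiH ((TensorProduct.assoc k H H H (c ⊗ₜ[k] z)) ⊗ₜ[k] (TensorProduct.assoc k H H H (d ⊗ₜ[k] w)))
      = piH (c ⊗ₜ[k] d) * (S w * S z) := by
  induction c using TensorProduct.induction_on with
  | zero => simp
  | tmul x y =>
    induction d using TensorProduct.induction_on with
    | zero => simp
    | tmul u v => simp [PhiH_tmul, mul_assoc]
    | add d₁ d₂ h₁ h₂ =>
      rw [add_tmul, map_add, tmul_add, map_add, h₁, h₂, tmul_add, map_add, add_mul]
  | add c₁ c₂ h₁ h₂ =>
    rw [add_tmul, map_add, add_tmul, map_add, h₁, h₂, add_tmul, map_add, add_mul]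

lemma antipode_mul' (a b : H) : S (a * b) = S b * S a := by
  classical
  set ra := Coalgebra.Repr.arbitrary k a with hra
  set rb := Coalgebra.Repr.arbitrary k b with hrb
  have e1a : (LinearMap.lTensor H Δ) (Δ a) = ∑ i ∈ ra.index, ra.left i ⊗ₜ[k] Δ (ra.right i) := by
    rw [← ra.eq, map_sum]; simp
  have e1b : (LinearMap.lTensor H Δ) (Δ b) = ∑ j ∈ rb.index, rb.left j ⊗ₜ[k] Δ (rb.right j) := by
    rw [← rb.eq, map_sum]; simp
  have e2a : (LinearMap.lTensor H Δ) (Δ a)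
      = ∑ i ∈ ra.index, (TensorProduct.assoc k H H H) (Δ (ra.left i) ⊗ₜ[k] ra.right i) := by
    rw [← Coalgebra.coassoc_apply, ← ra.eq]
    rw [map_sum, map_sum]
    simp
  have e2b : (LinearMap.lTensor H Δ) (Δ b)
      = ∑ j ∈ rb.index, (TensorProduct.assoc k H H H) (Δ (rb.left j) ⊗ₜ[k] rb.right j) := by
    rw [← Coalgebra.coassoc_apply, ← rb.eq]
    rw [map_sum, map_sum]
    simp
  have cA : PhiH (((LinearMap.lTensor H Δ) (Δ a)) ⊗ₜ[k] ((LinearMap.lTensor H Δ) (Δ b)))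
      = S (a * b) := by
    rw [e1a, e1b]
    rw [sum_tmul, map_sum]
    simp only [tmul_sum, map_sum, PhiH_tmul, psiH_comul_comul]
    have hb' := repr_counit_right rb
    have ha' := repr_counit_right ra
    conv_rhs => rw [← ha', ← hb']
    rw [Finset.sum_mul_sum, map_sum]
    apply Finset.sum_congr rfl
    intro i _
    rw [map_sum]
    apply Finset.sum_congr rfl
    intro j _
    simp only [smul_mul_assoc, mul_smul_comm, map_smul, smul_smul, mul_one]
    rw [mul_comm (ε (ra.right i)) (ε (rb.right j))]
  have cB : PhiH (((LinearMap.lTensor H Δ) (Δ a)) ⊗ₜ[k] ((LinearMap.lTensor H Δ) (Δ b)))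
      = S b * S a := by
    rw [e2a, e2b]
    rw [sum_tmul, map_sum]
    simp only [tmul_sum, map_sum, PhiH_assoc_general, piH_comul_comul]
    have hb' := repr_counit_left rb
    have ha' := repr_counit_left ra
    conv_rhs => rw [← hb', ← ha', map_sum, map_sum, Finset.sum_mul_sum]
    rw [Finset.sum_comm]
    apply Finset.sum_congr rfl
    intro j _
    apply Finset.sum_congr rfl
    intro i _
    rw [Bialgebra.counit_mul, Algebra.smul_def, map_mul]
    simp only [← Algebra.smul_def, map_smul, smul_mul_assoc, mul_smul_comm, smul_smul]
  rw [← cA, cB]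

lemma starLApply (Sinv : H →ₗ[k] H) (hS1 : ∀ h : H, S (Sinv h) = h)
    (hS2 : ∀ h : H, Sinv (S h) = h) (x : H) :
    μ ((TensorProduct.comm k H H) ((LinearMap.lTensor H Sinv) (Δ x))) = algebraMap k H (ε x) := by
  have hinj : Function.Injective (S : H →ₗ[k] H) := by
    intro u v huv
    rw [← hS2 u, huv, hS2]
  apply hinj
  have lhs : μ ((TensorProduct.comm k H H) ((LinearMap.lTensor H Sinv) (Δ x)))
      = ∑ i ∈ (ℛ k x).index, Sinv ((ℛ k x).right i) * (ℛ k x).left i := by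
    rw [← (ℛ k x).eq]
    simp [map_sum]
  rw [lhs, map_sum]
  have : ∀ i ∈ (ℛ k x).index,
      S (Sinv ((ℛ k x).right i) * (ℛ k x).left i)
        = S ((ℛ k x).left i) * (ℛ k x).right i := by
    intro i _
    rw [antipode_mul', hS1]
  rw [Finset.sum_congr rfl this, HopfAlgebra.sum_antipode_mul_eq_algebraMap_counit]
  rw [Algebra.algebraMap_eq_smul_one, map_smul, antipode_one']


/-- `J0 ((x ⊗ g) ⊗ (y ⊗ f)) = x ⊗ (y ⊗ (g * f))`. -/
noncomputable def J0 : (P ⊗[k] H) ⊗[k] (P ⊗[k] H) →ₗ[k] P ⊗[k] (P ⊗[k] H) :=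
  (TensorProduct.assoc k P P H).toLinearMap
    ∘ₗ LinearMap.lTensor (P ⊗[k] P) (LinearMap.mul' k H)
    ∘ₗ (TensorProduct.tensorTensorTensorComm k P H P H).toLinearMap

@[simp] lemma J0_tmul (x y : P) (g f : H) :
    J0 ((x ⊗ₜ[k] g) ⊗ₜ[k] (y ⊗ₜ[k] f)) = x ⊗ₜ[k] (y ⊗ₜ[k] (g * f)) := by
  simp [J0]

/-- `XiF (g ⊗ (w ⊗ f)) = assoc (w ⊗ (g * f))` for `w : P ⊗ P`. -/
noncomputable def XiF : H ⊗[k] ((P ⊗[k] P) ⊗[k] H) →ₗ[k] P ⊗[k] (P ⊗[k] H) :=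
  (TensorProduct.assoc k P P H).toLinearMap
    ∘ₗ LinearMap.lTensor (P ⊗[k] P) (LinearMap.mul' k H ∘ₗ (TensorProduct.comm k H H).toLinearMap)
    ∘ₗ (TensorProduct.assoc k (P ⊗[k] P) H H).toLinearMap
    ∘ₗ (TensorProduct.comm k H ((P ⊗[k] P) ⊗[k] H)).toLinearMap

lemma XiF_tmul (g f : H) (w : P ⊗[k] P) :
    XiF (g ⊗ₜ[k] (w ⊗ₜ[k] f)) = (TensorProduct.assoc k P P H) (w ⊗ₜ[k] (g * f)) := by
  simp [XiF]

/-- `XiB ((w ⊗ g) ⊗ f) = Sinv (g * S f) ⊗ w` for `w : P ⊗ P`. -/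
noncomputable def XiB (Sinv : H →ₗ[k] H) : ((P ⊗[k] P) ⊗[k] H) ⊗[k] H →ₗ[k] H ⊗[k] (P ⊗[k] P) :=
  (TensorProduct.comm k (P ⊗[k] P) H).toLinearMap
    ∘ₗ LinearMap.lTensor (P ⊗[k] P) (Sinv ∘ₗ LinearMap.mul' k H)
    ∘ₗ (TensorProduct.assoc k (P ⊗[k] P) H H).toLinearMap
    ∘ₗ LinearMap.lTensor ((P ⊗[k] P) ⊗[k] H) (HopfAlgebra.antipode (R := k))

lemma XiB_tmul (Sinv : H →ₗ[k] H) (w : P ⊗[k] P) (g f : H) :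
    XiB Sinv ((w ⊗ₜ[k] g) ⊗ₜ[k] f) = Sinv (g * S f) ⊗ₜ[k] w := by
  simp [XiB]

/-- `c0 (g ⊗ g') = Sinv g' * g`. -/
noncomputable def c0 (Sinv : H →ₗ[k] H) : H ⊗[k] H →ₗ[k] H :=
  LinearMap.mul' k H ∘ₗ (TensorProduct.comm k H H).toLinearMap ∘ₗ LinearMap.lTensor H Sinv

@[simp] lemma c0_tmul (Sinv : H →ₗ[k] H) (g g' : H) : c0 Sinv (g ⊗ₜ[k] g') = Sinv g' * g := by
  simp [c0]

/-- `J0b ((x ⊗ g) ⊗ (y ⊗ e)) = Sinv (g * e) ⊗ (x ⊗ y)`. -/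
noncomputable def J0b (Sinv : H →ₗ[k] H) :
    (P ⊗[k] H) ⊗[k] (P ⊗[k] H) →ₗ[k] H ⊗[k] (P ⊗[k] P) :=
  (TensorProduct.comm k (P ⊗[k] P) H).toLinearMap
    ∘ₗ LinearMap.lTensor (P ⊗[k] P) (Sinv ∘ₗ LinearMap.mul' k H)
    ∘ₗ (TensorProduct.tensorTensorTensorComm k P H P H).toLinearMap

@[simp] lemma J0b_tmul (Sinv : H →ₗ[k] H) (x y : P) (g e : H) :
    J0b Sinv ((x ⊗ₜ[k] g) ⊗ₜ[k] (y ⊗ₜ[k] e)) = Sinv (g * e) ⊗ₜ[k] (x ⊗ₜ[k] y) := by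
  simp [J0b]

lemma fwd_core (Sinv : H →ₗ[k] H) (g : H) (V W : P ⊗[k] H) :
    XiF ((Sinv g) ⊗ₜ[k]
        ((LinearMap.lTensor (P ⊗[k] P) (LinearMap.mul' k H))
          ((TensorProduct.tensorTensorTensorComm k P H P H) (V ⊗ₜ[k] W))))
      = J0 (((LinearMap.lTensor P (c0 Sinv)) ((TensorProduct.assoc k P H H) (V ⊗ₜ[k] g))) ⊗ₜ[k] W) := by
  induction V using TensorProduct.induction_on with
  | zero => simp
  | tmul x g₁ =>
    induction W using TensorProduct.induction_on with
    | zero => simp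
    | tmul y f => simp [XiF_tmul, mul_assoc]
    | add W₁ W₂ h₁ h₂ =>
      simp only [tmul_add, map_add]
      rw [h₁, h₂]
  | add V₁ V₂ h₁ h₂ =>
    simp only [add_tmul, tmul_add, map_add]
    rw [h₁, h₂]

lemma fwd1a (Sinv : H →ₗ[k] H) (ρ : P →ₗ[k] P ⊗[k] H) (u : P ⊗[k] H) (b : P) :
    XiF ((LinearMap.lTensor H (rhoTwo ρ))
        ((TensorProduct.assoc k H P P) ((TensorProduct.comm k P H ((LinearMap.lTensor P Sinv) u)) ⊗ₜ[k] b)))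
      = J0 (((LinearMap.lTensor P (c0 Sinv)) ((TensorProduct.assoc k P H H) ((ρ.rTensor H) u))) ⊗ₜ[k] (ρ b)) := by
  induction u using TensorProduct.induction_on with
  | zero => simp
  | tmul x g =>
    rw [LinearMap.lTensor_tmul, TensorProduct.comm_tmul, TensorProduct.assoc_tmul,
      LinearMap.lTensor_tmul, LinearMap.rTensor_tmul]
    have : rhoTwo ρ (x ⊗ₜ[k] b)
        = (LinearMap.lTensor (P ⊗[k] P) (LinearMap.mul' k H))
            ((TensorProduct.tensorTensorTensorComm k P H P H) ((ρ x) ⊗ₜ[k] (ρ b))) := by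
      simp [rhoTwo]
    rw [this, fwd_core]
  | add u₁ u₂ h₁ h₂ =>
    simp only [map_add, add_tmul]
    rw [h₁, h₂]

lemma Qcollapse (ρ : P →ₗ[k] P ⊗[k] H)
    (hcoassoc : ∀ p : P,
      (TensorProduct.assoc k P H H) (ρ.rTensor H (ρ p))
        = (Coalgebra.comul (R := k) (A := H)).lTensor P (ρ p))
    (hcounit : ∀ p : P,
      (TensorProduct.rid k P) ((Coalgebra.counit (R := k) (A := H)).lTensor P (ρ p)) = p)
    (c : H ⊗[k] H →ₗ[k] H) (hc : ∀ x : H, c (Δ x) = algebraMap k H (ε x)) (p : P) :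
    (LinearMap.lTensor P c) ((TensorProduct.assoc k P H H) (ρ.rTensor H (ρ p))) = p ⊗ₜ[k] (1 : H) := by
  rw [hcoassoc p]
  have h1 : (LinearMap.lTensor P c) ((Coalgebra.comul (R := k) (A := H)).lTensor P (ρ p))
      = (LinearMap.lTensor P (c ∘ₗ Coalgebra.comul)) (ρ p) := by
    rw [LinearMap.lTensor_comp, LinearMap.comp_apply]
  rw [h1]
  have h2 : c ∘ₗ (Coalgebra.comul (R := k) (A := H)) = Algebra.linearMap k H ∘ₗ Coalgebra.counit :=
    LinearMap.ext hc
  rw [h2, LinearMap.lTensor_comp, LinearMap.comp_apply]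
  have h3 : (Coalgebra.counit (R := k) (A := H)).lTensor P (ρ p) = p ⊗ₜ[k] (1 : k) := by
    have := hcounit p
    have h4 := congrArg (TensorProduct.rid k P).symm this
    rw [LinearEquiv.symm_apply_apply] at h4
    rw [h4, TensorProduct.rid_symm_apply]
  rw [h3, LinearMap.lTensor_tmul]
  simp

lemma J0_one_left (a : P) (w : P ⊗[k] H) : J0 ((a ⊗ₜ[k] (1 : H)) ⊗ₜ[k] w) = a ⊗ₜ[k] w := by
  induction w using TensorProduct.induction_on with
  | zero => simp
  | tmul y f => rw [J0_tmul, one_mul]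
  | add w₁ w₂ h₁ h₂ =>
    simp only [tmul_add, map_add]
    rw [h₁, h₂]

lemma fwd_reconstruct (Sinv : H →ₗ[k] H)
    (hS1 : ∀ h : H, S (Sinv h) = h) (hS2 : ∀ h : H, Sinv (S h) = h)
    (ρ : P →ₗ[k] P ⊗[k] H)
    (hcoassoc : ∀ p : P,
      (TensorProduct.assoc k P H H) (ρ.rTensor H (ρ p))
        = (Coalgebra.comul (R := k) (A := H)).lTensor P (ρ p))
    (hcounit : ∀ p : P,
      (TensorProduct.rid k P) ((Coalgebra.counit (R := k) (A := H)).lTensor P (ρ p)) = p)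
    (t : P ⊗[k] P) :
    XiF ((LinearMap.lTensor H (rhoTwo ρ))
        ((TensorProduct.assoc k H P P) ((deltaL Sinv ρ).rTensor P t)))
      = ρ.lTensor P t := by
  induction t using TensorProduct.induction_on with
  | zero => simp
  | tmul a b =>
    rw [LinearMap.rTensor_tmul]
    have hdl : deltaL Sinv ρ a = TensorProduct.comm k P H ((LinearMap.lTensor P Sinv) (ρ a)) := by
      simp [deltaL]
    rw [hdl, fwd1a, Qcollapse ρ hcoassoc hcounit (c0 Sinv)
      (fun x => starLApply Sinv hS1 hS2 x) a]
    rw [J0_one_left, LinearMap.lTensor_tmul]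
  | add t₁ t₂ h₁ h₂ =>
    simp only [map_add]
    rw [h₁, h₂]

/-- `thetaF (g ⊗ (u ⊗ f)) = u ⊗ (g * f)`. -/
noncomputable def thetaF : H ⊗[k] (H ⊗[k] H) →ₗ[k] H ⊗[k] H :=
  LinearMap.lTensor H (LinearMap.mul' k H)
    ∘ₗ (TensorProduct.assoc k H H H).toLinearMap
    ∘ₗ (TensorProduct.comm k H H).toLinearMap.rTensor H
    ∘ₗ (TensorProduct.assoc k H H H).symm.toLinearMap

@[simp] lemma thetaF_tmul (g u f : H) :
    (thetaF : H ⊗[k] (H ⊗[k] H) →ₗ[k] H ⊗[k] H) (g ⊗ₜ[k] (u ⊗ₜ[k] f)) = u ⊗ₜ[k] (g * f) := by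
  simp [thetaF]

/-- the inner part of `adCoaction`. -/
noncomputable def adA3 : H ⊗[k] (H ⊗[k] H) →ₗ[k] H ⊗[k] H :=
  (LinearMap.mul' k H).lTensor H
    ∘ₗ (TensorProduct.assoc k H H H).toLinearMap
    ∘ₗ (TensorProduct.comm k H H).toLinearMap.rTensor H
    ∘ₗ (TensorProduct.assoc k H H H).symm.toLinearMap
    ∘ₗ (HopfAlgebra.antipode (R := k) (A := H)).rTensor (H ⊗[k] H)

lemma adCoaction_eq :
    (adCoaction : H →ₗ[k] H ⊗[k] H)
      = adA3 ∘ₗ LinearMap.lTensor H (Coalgebra.comul (R := k) (A := H)) ∘ₗ Coalgebra.comul := rfl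

@[simp] lemma adA3_tmul (a c d : H) :
    (adA3 : H ⊗[k] (H ⊗[k] H) →ₗ[k] H ⊗[k] H) (a ⊗ₜ[k] (c ⊗ₜ[k] d)) = c ⊗ₜ[k] (S a * d) := by
  simp [adA3]

/-- `GF ((a ⊗ b) ⊗ (c ⊗ d)) = c ⊗ (a * (S b * d))`. -/
noncomputable def GF : (H ⊗[k] H) ⊗[k] (H ⊗[k] H) →ₗ[k] H ⊗[k] H :=
  thetaF ∘ₗ LinearMap.lTensor H adA3 ∘ₗ (TensorProduct.assoc k H H (H ⊗[k] H)).toLinearMap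

lemma GF_apply (z w : H ⊗[k] H) :
    GF (z ⊗ₜ[k] w) = (LinearMap.lTensor H (LinearMap.mulLeft k (chiS z))) w := by
  induction z using TensorProduct.induction_on with
  | zero => simp [GF]
  | tmul a b =>
    induction w using TensorProduct.induction_on with
    | zero => simp [GF]
    | tmul c d => simp [GF, LinearMap.mulLeft, mul_assoc]
    | add w₁ w₂ h₁ h₂ =>
      simp only [tmul_add, map_add] at h₁ h₂ ⊢
      rw [h₁, h₂]
  | add z₁ z₂ h₁ h₂ =>
    have : chiS (z₁ + z₂) = chiS z₁ + chiS z₂ := map_add _ _ _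
    simp only [add_tmul, map_add, this] at h₁ h₂ ⊢
    rw [h₁, h₂]
    have : LinearMap.mulLeft k (chiS z₁ + chiS z₂)
        = LinearMap.mulLeft k (chiS z₁) + LinearMap.mulLeft k (chiS z₂) := by
      ext x; simp [add_mul]
    rw [this, LinearMap.lTensor_add, LinearMap.add_apply]

lemma GF_comul (l r : H) : GF (Δ l ⊗ₜ[k] Δ r) = ε l • Δ r := by
  rw [GF_apply, chiS_comul]
  have : LinearMap.mulLeft k (algebraMap k H (ε l)) = ε l • LinearMap.id := by
    ext x; simp [Algebra.smul_def]
  rw [this, LinearMap.lTensor_smul, LinearMap.lTensor_id, LinearMap.smul_apply, LinearMap.id_apply]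

lemma hopfI3 (h : H) :
    (thetaF : H ⊗[k] (H ⊗[k] H) →ₗ[k] H ⊗[k] H)
        ((LinearMap.lTensor H (adCoaction : H →ₗ[k] H ⊗[k] H)) (Δ h)) = Δ h := by
  have e1 : (LinearMap.lTensor H (adCoaction : H →ₗ[k] H ⊗[k] H)) (Δ h)
      = (LinearMap.lTensor H adA3)
          ((LinearMap.lTensor H (LinearMap.lTensor H Δ)) ((LinearMap.lTensor H Δ) (Δ h))) := by
    rw [adCoaction_eq]
    simp only [LinearMap.lTensor_comp, LinearMap.comp_apply]
  have e3' : ∀ y : (H ⊗[k] H) ⊗[k] H,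
      (LinearMap.lTensor H (LinearMap.lTensor H Δ)) ((TensorProduct.assoc k H H H) y)
        = (TensorProduct.assoc k H H (H ⊗[k] H)) ((LinearMap.lTensor (H ⊗[k] H) Δ) y) := by
    intro y
    induction y using TensorProduct.induction_on with
    | zero => simp
    | tmul c f =>
      induction c using TensorProduct.induction_on with
      | zero => simp
      | tmul a b => simp
      | add c₁ c₂ h₁ h₂ =>
        simp only [add_tmul, map_add] at h₁ h₂ ⊢
        rw [h₁, h₂]
    | add y₁ y₂ h₁ h₂ =>
      simp only [map_add] at h₁ h₂ ⊢
      rw [h₁, h₂]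
  have e3 : (LinearMap.lTensor H (LinearMap.lTensor H Δ)) ((LinearMap.lTensor H Δ) (Δ h))
      = (TensorProduct.assoc k H H (H ⊗[k] H)) ((TensorProduct.map Δ Δ) (Δ h)) := by
    rw [← Coalgebra.coassoc_apply h, e3']
    congr 1
    rw [← LinearMap.comp_apply, LinearMap.lTensor_comp_rTensor]
  have e4 : (thetaF : H ⊗[k] (H ⊗[k] H) →ₗ[k] H ⊗[k] H)
        ((LinearMap.lTensor H (adCoaction : H →ₗ[k] H ⊗[k] H)) (Δ h))
      = GF ((TensorProduct.map Δ Δ) (Δ h)) := by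
    rw [e1, e3]
    simp only [GF, LinearMap.comp_apply, LinearEquiv.coe_coe]
  rw [e4]
  have e5 : (TensorProduct.map Δ Δ) (Δ h)
      = ∑ i ∈ (ℛ k h).index, Δ ((ℛ k h).left i) ⊗ₜ[k] Δ ((ℛ k h).right i) := by
    rw [← (ℛ k h).eq, map_sum]
    simp
  rw [e5, map_sum]
  have e6 : ∀ i ∈ (ℛ k h).index,
      GF (Δ ((ℛ k h).left i) ⊗ₜ[k] Δ ((ℛ k h).right i))
        = ε ((ℛ k h).left i) • Δ ((ℛ k h).right i) := fun i _ => GF_comul _ _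
  rw [Finset.sum_congr rfl e6]
  have e7 : ∑ i ∈ (ℛ k h).index, ε ((ℛ k h).left i) • Δ ((ℛ k h).right i)
      = Δ (∑ i ∈ (ℛ k h).index, ε ((ℛ k h).left i) • (ℛ k h).right i) := by
    rw [map_sum]
    simp
  rw [e7, repr_counit_left]

lemma rhoTwo_one (ρ : P →ₗ[k] P ⊗[k] H) (hone : ρ 1 = 1) :
    rhoTwo ρ ((1 : P) ⊗ₜ[k] (1 : P)) = ((1 : P) ⊗ₜ[k] (1 : P)) ⊗ₜ[k] (1 : H) := by
  simp [rhoTwo, hone, Algebra.TensorProduct.one_def]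

lemma XiF_omega (ω : H →ₗ[k] P ⊗[k] P) (z : H ⊗[k] (H ⊗[k] H)) :
    XiF ((LinearMap.lTensor H (ω.rTensor H)) z)
      = (TensorProduct.assoc k P P H) ((ω.rTensor H) (thetaF z)) := by
  induction z using TensorProduct.induction_on with
  | zero => simp
  | tmul g v =>
    induction v using TensorProduct.induction_on with
    | zero => simp
    | tmul u f =>
      rw [LinearMap.lTensor_tmul, LinearMap.rTensor_tmul, XiF_tmul, thetaF_tmul,
        LinearMap.rTensor_tmul]
    | add v₁ v₂ h₁ h₂ =>
      simp only [tmul_add, map_add] at h₁ h₂ ⊢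
      rw [h₁, h₂]
  | add z₁ z₂ h₁ h₂ =>
    simp only [map_add] at h₁ h₂ ⊢
    rw [h₁, h₂]

lemma forward_direction
    (Sinv : H →ₗ[k] H)
    (hS1 : ∀ h : H, HopfAlgebra.antipode (R := k) (Sinv h) = h)
    (hS2 : ∀ h : H, Sinv (HopfAlgebra.antipode (R := k) h) = h)
    (ρ : P →ₗ[k] P ⊗[k] H)
    (hcoassoc : ∀ p : P,
      (TensorProduct.assoc k P H H) (ρ.rTensor H (ρ p))
        = (Coalgebra.comul (R := k) (A := H)).lTensor P (ρ p))
    (hcounit : ∀ p : P,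
      (TensorProduct.rid k P) ((Coalgebra.counit (R := k) (A := H)).lTensor P (ρ p)) = p)
    (hone : ρ 1 = 1)
    (ω : H →ₗ[k] P ⊗[k] P)
    (hAd : ∀ h : H, rhoTwo ρ (ω h) = ω.rTensor H (adCoaction h))
    (hii : ∀ h : H,
      (TensorProduct.assoc k H P P) ((deltaL Sinv ρ).rTensor P (ω h))
        = h ⊗ₜ[k] ((1 : P) ⊗ₜ[k] (1 : P))
            - (Coalgebra.counit (R := k) h) • ((1 : H) ⊗ₜ[k] ((1 : P) ⊗ₜ[k] (1 : P)))
          + ω.lTensor H (Coalgebra.comul (R := k) h))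
    (h : H) :
    ρ.lTensor P (ω h)
      = (1 : P) ⊗ₜ[k] ((1 : P) ⊗ₜ[k] h)
          - (Coalgebra.counit (R := k) h) • ((1 : P) ⊗ₜ[k] ((1 : P) ⊗ₜ[k] (1 : H)))
        + (TensorProduct.assoc k P P H) (ω.rTensor H (Coalgebra.comul (R := k) h)) := by
  have h0 := fwd_reconstruct Sinv hS1 hS2 ρ hcoassoc hcounit (ω h)
  rw [← h0, hii h]
  simp only [map_add, map_sub, map_smul]
  have hA : XiF ((LinearMap.lTensor H (rhoTwo ρ)) (h ⊗ₜ[k] ((1 : P) ⊗ₜ[k] (1 : P))))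
      = (1 : P) ⊗ₜ[k] ((1 : P) ⊗ₜ[k] h) := by
    rw [LinearMap.lTensor_tmul, rhoTwo_one ρ hone, XiF_tmul, mul_one, TensorProduct.assoc_tmul]
  have hB : XiF ((LinearMap.lTensor H (rhoTwo ρ)) ((1 : H) ⊗ₜ[k] ((1 : P) ⊗ₜ[k] (1 : P))))
      = (1 : P) ⊗ₜ[k] ((1 : P) ⊗ₜ[k] (1 : H)) := by
    rw [LinearMap.lTensor_tmul, rhoTwo_one ρ hone, XiF_tmul, mul_one, TensorProduct.assoc_tmul]
  have hC : XiF ((LinearMap.lTensor H (rhoTwo ρ)) (ω.lTensor H (Δ h)))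
      = (TensorProduct.assoc k P P H) ((ω.rTensor H) (Δ h)) := by
    have c1 : (LinearMap.lTensor H (rhoTwo ρ)) ((ω.lTensor H) (Δ h))
        = (LinearMap.lTensor H (ω.rTensor H)) ((LinearMap.lTensor H (adCoaction : H →ₗ[k] H ⊗[k] H)) (Δ h)) := by
      rw [← LinearMap.comp_apply, ← LinearMap.lTensor_comp]
      rw [show rhoTwo ρ ∘ₗ ω = ω.rTensor H ∘ₗ (adCoaction : H →ₗ[k] H ⊗[k] H) from LinearMap.ext hAd]
      rw [LinearMap.lTensor_comp, LinearMap.comp_apply]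
    rw [c1, XiF_omega, hopfI3]
  rw [hA, hB, hC]

lemma bwd_core (Sinv : H →ₗ[k] H) (f : H) (V W : P ⊗[k] H) :
    XiB Sinv (((LinearMap.lTensor (P ⊗[k] P) (LinearMap.mul' k H))
          ((TensorProduct.tensorTensorTensorComm k P H P H) (V ⊗ₜ[k] W))) ⊗ₜ[k] f)
      = J0b Sinv (V ⊗ₜ[k] ((LinearMap.lTensor P chiS) ((TensorProduct.assoc k P H H) (W ⊗ₜ[k] f)))) := by
  induction V using TensorProduct.induction_on with
  | zero => simp
  | tmul x g =>
    induction W using TensorProduct.induction_on with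
    | zero => simp
    | tmul y e => simp [XiB_tmul, mul_assoc]
    | add W₁ W₂ h₁ h₂ =>
      simp only [tmul_add, add_tmul, map_add] at h₁ h₂ ⊢
      rw [h₁, h₂]
  | add V₁ V₂ h₁ h₂ =>
    simp only [tmul_add, add_tmul, map_add] at h₁ h₂ ⊢
    rw [h₁, h₂]

lemma bwd1b (Sinv : H →ₗ[k] H) (ρ : P →ₗ[k] P ⊗[k] H) (a : P) (v : P ⊗[k] H) :
    XiB Sinv (((rhoTwo ρ).rTensor H) ((TensorProduct.assoc k P P H).symm (a ⊗ₜ[k] v)))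
      = J0b Sinv ((ρ a) ⊗ₜ[k]
          ((LinearMap.lTensor P chiS) ((TensorProduct.assoc k P H H) ((ρ.rTensor H) v)))) := by
  induction v using TensorProduct.induction_on with
  | zero => simp
  | tmul y f =>
    rw [TensorProduct.assoc_symm_tmul, LinearMap.rTensor_tmul, LinearMap.rTensor_tmul]
    have : rhoTwo ρ (a ⊗ₜ[k] y)
        = (LinearMap.lTensor (P ⊗[k] P) (LinearMap.mul' k H))
            ((TensorProduct.tensorTensorTensorComm k P H P H) ((ρ a) ⊗ₜ[k] (ρ y))) := by
      simp [rhoTwo]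
    rw [this, bwd_core]
  | add v₁ v₂ h₁ h₂ =>
    simp only [tmul_add, map_add] at h₁ h₂ ⊢
    rw [h₁, h₂]

lemma J0b_one_right (Sinv : H →ₗ[k] H) (u : P ⊗[k] H) (b : P) :
    J0b Sinv (u ⊗ₜ[k] (b ⊗ₜ[k] (1 : H)))
      = (TensorProduct.assoc k H P P)
          ((TensorProduct.comm k P H ((LinearMap.lTensor P Sinv) u)) ⊗ₜ[k] b) := by
  induction u using TensorProduct.induction_on with
  | zero => simp
  | tmul x g => simp
  | add u₁ u₂ h₁ h₂ =>
    simp only [add_tmul, map_add] at h₁ h₂ ⊢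
    rw [h₁, h₂]

lemma bwd_reconstruct (Sinv : H →ₗ[k] H) (ρ : P →ₗ[k] P ⊗[k] H)
    (hcoassoc : ∀ p : P,
      (TensorProduct.assoc k P H H) (ρ.rTensor H (ρ p))
        = (Coalgebra.comul (R := k) (A := H)).lTensor P (ρ p))
    (hcounit : ∀ p : P,
      (TensorProduct.rid k P) ((Coalgebra.counit (R := k) (A := H)).lTensor P (ρ p)) = p)
    (t : P ⊗[k] P) :
    XiB Sinv (((rhoTwo ρ).rTensor H) ((TensorProduct.assoc k P P H).symm (ρ.lTensor P t)))
      = (TensorProduct.assoc k H P P) ((deltaL Sinv ρ).rTensor P t) := by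
  induction t using TensorProduct.induction_on with
  | zero => simp
  | tmul a b =>
    rw [LinearMap.lTensor_tmul, bwd1b,
      Qcollapse ρ hcoassoc hcounit chiS (fun x => chiS_comul x) b, J0b_one_right]
    rw [LinearMap.rTensor_tmul]
    have hdl : deltaL Sinv ρ a = TensorProduct.comm k P H ((LinearMap.lTensor P Sinv) (ρ a)) := by
      simp [deltaL]
    rw [hdl]
  | add t₁ t₂ h₁ h₂ =>
    simp only [map_add] at h₁ h₂ ⊢
    rw [h₁, h₂]

/-- `thetaB ((u ⊗ g) ⊗ f) = Sinv (g * S f) ⊗ u`. -/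
noncomputable def thetaB (Sinv : H →ₗ[k] H) : (H ⊗[k] H) ⊗[k] H →ₗ[k] H ⊗[k] H :=
  (TensorProduct.comm k H H).toLinearMap
    ∘ₗ LinearMap.lTensor H (Sinv ∘ₗ LinearMap.mul' k H)
    ∘ₗ (TensorProduct.assoc k H H H).toLinearMap
    ∘ₗ LinearMap.lTensor (H ⊗[k] H) (HopfAlgebra.antipode (R := k))

@[simp] lemma thetaB_tmul (Sinv : H →ₗ[k] H) (u g f : H) :
    thetaB Sinv ((u ⊗ₜ[k] g) ⊗ₜ[k] f) = Sinv (g * S f) ⊗ₜ[k] u := by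
  simp [thetaB]

lemma XiB_omega (Sinv : H →ₗ[k] H) (ω : H →ₗ[k] P ⊗[k] P) (z : (H ⊗[k] H) ⊗[k] H) :
    XiB Sinv (((ω.rTensor H).rTensor H) z) = (LinearMap.lTensor H ω) (thetaB Sinv z) := by
  induction z using TensorProduct.induction_on with
  | zero => simp
  | tmul v f =>
    induction v using TensorProduct.induction_on with
    | zero => simp
    | tmul u g =>
      rw [LinearMap.rTensor_tmul, LinearMap.rTensor_tmul, XiB_tmul, thetaB_tmul,
        LinearMap.lTensor_tmul]
    | add v₁ v₂ h₁ h₂ =>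
      simp only [add_tmul, map_add] at h₁ h₂ ⊢
      rw [h₁, h₂]
  | add z₁ z₂ h₁ h₂ =>
    simp only [map_add] at h₁ h₂ ⊢
    rw [h₁, h₂]

/-- `GB ((a ⊗ b) ⊗ (c ⊗ d)) = Sinv ((S a * c) * S d) ⊗ b`. -/
noncomputable def GB (Sinv : H →ₗ[k] H) : (H ⊗[k] H) ⊗[k] (H ⊗[k] H) →ₗ[k] H ⊗[k] H :=
  thetaB Sinv ∘ₗ (adA3.rTensor H)
    ∘ₗ (TensorProduct.assoc k H (H ⊗[k] H) H).symm.toLinearMap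
    ∘ₗ LinearMap.lTensor H (TensorProduct.assoc k H H H).symm.toLinearMap
    ∘ₗ (TensorProduct.assoc k H H (H ⊗[k] H)).toLinearMap

lemma GB_apply (Sinv : H →ₗ[k] H) (z w : H ⊗[k] H) :
    GB Sinv (z ⊗ₜ[k] w)
      = ((Sinv ∘ₗ LinearMap.mulRight k (chiS w) ∘ₗ HopfAlgebra.antipode (R := k)).rTensor H) z := by
  induction z using TensorProduct.induction_on with
  | zero => simp [GB]
  | tmul a b =>
    induction w using TensorProduct.induction_on with
    | zero => simp [GB]
    | tmul c d => simp [GB, LinearMap.mulRight, mul_assoc]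
    | add w₁ w₂ h₁ h₂ =>
      have hch : chiS (w₁ + w₂) = chiS w₁ + chiS w₂ := map_add _ _ _
      have hmr : LinearMap.mulRight k (chiS w₁ + chiS w₂)
          = LinearMap.mulRight k (chiS w₁) + LinearMap.mulRight k (chiS w₂) := by
        ext x; simp [mul_add]
      simp only [tmul_add, map_add, hch, hmr] at h₁ h₂ ⊢
      rw [h₁, h₂]
      simp only [LinearMap.comp_add, LinearMap.add_comp, LinearMap.rTensor_add,
        LinearMap.add_apply]
  | add z₁ z₂ h₁ h₂ =>
    simp only [add_tmul, map_add] at h₁ h₂ ⊢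
    rw [h₁, h₂]

lemma GB_comul (Sinv : H →ₗ[k] H) (hS2 : ∀ h : H, Sinv (S h) = h) (l r : H) :
    GB Sinv (Δ l ⊗ₜ[k] Δ r) = ε r • Δ l := by
  rw [GB_apply, chiS_comul]
  have : Sinv ∘ₗ LinearMap.mulRight k (algebraMap k H (ε r)) ∘ₗ HopfAlgebra.antipode (R := k)
      = ε r • LinearMap.id := by
    ext x
    simp only [LinearMap.comp_apply, LinearMap.mulRight_apply, LinearMap.smul_apply,
      LinearMap.id_apply]
    rw [← Algebra.commutes, ← Algebra.smul_def, map_smul, hS2]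
  rw [this, LinearMap.rTensor_smul, LinearMap.rTensor_id, LinearMap.smul_apply, LinearMap.id_apply]

lemma hopfI3b (Sinv : H →ₗ[k] H) (hS2 : ∀ h : H, Sinv (S h) = h) (h : H) :
    thetaB Sinv (((adCoaction : H →ₗ[k] H ⊗[k] H).rTensor H) (Δ h)) = Δ h := by
  have e1 : ((adCoaction : H →ₗ[k] H ⊗[k] H).rTensor H) (Δ h)
      = (adA3.rTensor H)
          (((LinearMap.lTensor H Δ).rTensor H) ((LinearMap.rTensor H (Coalgebra.comul (R := k) (A := H))) (Δ h))) := by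
    rw [adCoaction_eq]
    simp only [LinearMap.rTensor_comp, LinearMap.comp_apply]
  have e3' : ∀ y : H ⊗[k] (H ⊗[k] H),
      ((LinearMap.lTensor H Δ).rTensor H) ((TensorProduct.assoc k H H H).symm y)
        = (TensorProduct.assoc k H (H ⊗[k] H) H).symm
            ((LinearMap.lTensor H (LinearMap.rTensor H (Coalgebra.comul (R := k) (A := H)))) y) := by
    intro y
    induction y using TensorProduct.induction_on with
    | zero => simp
    | tmul a v =>
      induction v using TensorProduct.induction_on with
      | zero => simp
      | tmul b c => simp
      | add v₁ v₂ h₁ h₂ =>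
        simp only [tmul_add, map_add] at h₁ h₂ ⊢
        rw [h₁, h₂]
    | add y₁ y₂ h₁ h₂ =>
      simp only [map_add] at h₁ h₂ ⊢
      rw [h₁, h₂]
  have e5' : ∀ y : (H ⊗[k] H) ⊗[k] H,
      (LinearMap.lTensor H (LinearMap.lTensor H Δ)) ((TensorProduct.assoc k H H H) y)
        = (TensorProduct.assoc k H H (H ⊗[k] H)) ((LinearMap.lTensor (H ⊗[k] H) Δ) y) := by
    intro y
    induction y using TensorProduct.induction_on with
    | zero => simp
    | tmul c f =>
      induction c using TensorProduct.induction_on with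
      | zero => simp
      | tmul a b => simp
      | add c₁ c₂ h₁ h₂ =>
        simp only [add_tmul, map_add] at h₁ h₂ ⊢
        rw [h₁, h₂]
    | add y₁ y₂ h₁ h₂ =>
      simp only [map_add] at h₁ h₂ ⊢
      rw [h₁, h₂]
  have e2 : (LinearMap.rTensor H (Coalgebra.comul (R := k) (A := H))) (Δ h) = (TensorProduct.assoc k H H H).symm ((LinearMap.lTensor H Δ) (Δ h)) :=
    (Coalgebra.coassoc_symm_apply h).symm
  have e4 : (LinearMap.lTensor H (LinearMap.rTensor H (Coalgebra.comul (R := k) (A := H)))) ((LinearMap.lTensor H Δ) (Δ h))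
      = (LinearMap.lTensor H (TensorProduct.assoc k H H H).symm.toLinearMap)
          ((LinearMap.lTensor H (LinearMap.lTensor H Δ)) ((LinearMap.lTensor H Δ) (Δ h))) := by
    have inner : (LinearMap.rTensor H (Coalgebra.comul (R := k) (A := H))) ∘ₗ (Coalgebra.comul (R := k) (A := H))
        = (TensorProduct.assoc k H H H).symm.toLinearMap
            ∘ₗ LinearMap.lTensor H (Coalgebra.comul (R := k) (A := H)) ∘ₗ (Coalgebra.comul (R := k) (A := H)) :=
      LinearMap.ext fun x => (Coalgebra.coassoc_symm_apply x).symm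
    rw [← LinearMap.comp_apply, ← LinearMap.lTensor_comp, inner, LinearMap.lTensor_comp,
      LinearMap.lTensor_comp]
    simp only [LinearMap.comp_apply]
  have e6 : (LinearMap.lTensor H (LinearMap.lTensor H Δ)) ((LinearMap.lTensor H Δ) (Δ h))
      = (TensorProduct.assoc k H H (H ⊗[k] H)) ((TensorProduct.map Δ Δ) (Δ h)) := by
    rw [← Coalgebra.coassoc_apply h, e5']
    congr 1
    rw [← LinearMap.comp_apply, LinearMap.lTensor_comp_rTensor]
  have key : thetaB Sinv (((adCoaction : H →ₗ[k] H ⊗[k] H).rTensor H) (Δ h))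
      = GB Sinv ((TensorProduct.map Δ Δ) (Δ h)) := by
    rw [e1, e2, e3', e4, e6]
    simp only [GB, LinearMap.comp_apply, LinearEquiv.coe_coe]
  rw [key]
  have e7 : (TensorProduct.map Δ Δ) (Δ h)
      = ∑ i ∈ (ℛ k h).index, Δ ((ℛ k h).left i) ⊗ₜ[k] Δ ((ℛ k h).right i) := by
    rw [← (ℛ k h).eq, map_sum]
    simp
  rw [e7, map_sum]
  have e8 : ∀ i ∈ (ℛ k h).index,
      GB Sinv (Δ ((ℛ k h).left i) ⊗ₜ[k] Δ ((ℛ k h).right i))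
        = ε ((ℛ k h).right i) • Δ ((ℛ k h).left i) := fun i _ => GB_comul Sinv hS2 _ _
  rw [Finset.sum_congr rfl e8]
  have e9 : ∑ i ∈ (ℛ k h).index, ε ((ℛ k h).right i) • Δ ((ℛ k h).left i)
      = Δ (∑ i ∈ (ℛ k h).index, ε ((ℛ k h).right i) • (ℛ k h).left i) := by
    rw [map_sum]
    simp
  rw [e9, repr_counit_right]

lemma backward_direction
    (Sinv : H →ₗ[k] H)
    (hS2 : ∀ h : H, Sinv (HopfAlgebra.antipode (R := k) h) = h)
    (ρ : P →ₗ[k] P ⊗[k] H)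
    (hcoassoc : ∀ p : P,
      (TensorProduct.assoc k P H H) (ρ.rTensor H (ρ p))
        = (Coalgebra.comul (R := k) (A := H)).lTensor P (ρ p))
    (hcounit : ∀ p : P,
      (TensorProduct.rid k P) ((Coalgebra.counit (R := k) (A := H)).lTensor P (ρ p)) = p)
    (hone : ρ 1 = 1)
    (ω : H →ₗ[k] P ⊗[k] P)
    (hAd : ∀ h : H, rhoTwo ρ (ω h) = ω.rTensor H (adCoaction h))
    (hiii : ∀ h : H,
      ρ.lTensor P (ω h)
        = (1 : P) ⊗ₜ[k] ((1 : P) ⊗ₜ[k] h)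
            - (Coalgebra.counit (R := k) h) • ((1 : P) ⊗ₜ[k] ((1 : P) ⊗ₜ[k] (1 : H)))
          + (TensorProduct.assoc k P P H) (ω.rTensor H (Coalgebra.comul (R := k) h)))
    (h : H) :
    (TensorProduct.assoc k H P P) ((deltaL Sinv ρ).rTensor P (ω h))
      = h ⊗ₜ[k] ((1 : P) ⊗ₜ[k] (1 : P))
          - (Coalgebra.counit (R := k) h) • ((1 : H) ⊗ₜ[k] ((1 : P) ⊗ₜ[k] (1 : P)))
        + ω.lTensor H (Coalgebra.comul (R := k) h) := by
  have h0 := bwd_reconstruct Sinv ρ hcoassoc hcounit (ω h)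
  rw [← h0, hiii h]
  simp only [map_add, map_sub, map_smul]
  have hA : XiB Sinv (((rhoTwo ρ).rTensor H)
        ((TensorProduct.assoc k P P H).symm ((1 : P) ⊗ₜ[k] ((1 : P) ⊗ₜ[k] h))))
      = h ⊗ₜ[k] ((1 : P) ⊗ₜ[k] (1 : P)) := by
    rw [TensorProduct.assoc_symm_tmul, LinearMap.rTensor_tmul, rhoTwo_one ρ hone, XiB_tmul,
      one_mul, hS2]
  have hB : XiB Sinv (((rhoTwo ρ).rTensor H)
        ((TensorProduct.assoc k P P H).symm ((1 : P) ⊗ₜ[k] ((1 : P) ⊗ₜ[k] (1 : H)))))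
      = (1 : H) ⊗ₜ[k] ((1 : P) ⊗ₜ[k] (1 : P)) := by
    rw [TensorProduct.assoc_symm_tmul, LinearMap.rTensor_tmul, rhoTwo_one ρ hone, XiB_tmul,
      one_mul, hS2]
  have hC : XiB Sinv (((rhoTwo ρ).rTensor H)
        ((TensorProduct.assoc k P P H).symm
          ((TensorProduct.assoc k P P H) ((ω.rTensor H) (Δ h)))))
      = ω.lTensor H (Δ h) := by
    rw [LinearEquiv.symm_apply_apply]
    have c1 : ((rhoTwo ρ).rTensor H) ((ω.rTensor H) (Δ h))
        = ((ω.rTensor H).rTensor H)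
            (((adCoaction : H →ₗ[k] H ⊗[k] H).rTensor H) (Δ h)) := by
      rw [← LinearMap.comp_apply, ← LinearMap.rTensor_comp]
      rw [show rhoTwo ρ ∘ₗ ω = ω.rTensor H ∘ₗ (adCoaction : H →ₗ[k] H ⊗[k] H) from
        LinearMap.ext hAd]
      rw [LinearMap.rTensor_comp, LinearMap.comp_apply]
    rw [c1, XiB_omega, hopfI3b Sinv hS2]
  rw [hA, hB, hC]

/-- let `P` be a right `H`-comodule algebra (`H` with bijective antipode)
and let `ω : H → P ⊗ P` be Ad-covariant, i.e.
`ρ₂(ω(h)) = Σ ω(h₍₂₎) ⊗ S(h₍₁₎) h₍₃₎`. Then conditions (ii) and (iii) are equivalent: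
(ii) `(Δ_L ⊗ id)(ω(h)) = h ⊗ 1 ⊗ 1 − ε(h) 1 ⊗ 1 ⊗ 1 + Σ h₍₁₎ ⊗ ω(h₍₂₎)`;
(iii) `(id ⊗ ρ)(ω(h)) = 1 ⊗ 1 ⊗ h − ε(h) 1 ⊗ 1 ⊗ 1 + Σ ω(h₍₁₎) ⊗ h₍₂₎`. -/
theorem statement14
    (Sinv : H →ₗ[k] H)
    (hS1 : ∀ h : H, HopfAlgebra.antipode (R := k) (Sinv h) = h)
    (hS2 : ∀ h : H, Sinv (HopfAlgebra.antipode (R := k) h) = h)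
    (ρ : P →ₗ[k] P ⊗[k] H)
    (hcoassoc : ∀ p : P,
      (TensorProduct.assoc k P H H) (ρ.rTensor H (ρ p))
        = (Coalgebra.comul (R := k) (A := H)).lTensor P (ρ p))
    (hcounit : ∀ p : P,
      (TensorProduct.rid k P) ((Coalgebra.counit (R := k) (A := H)).lTensor P (ρ p)) = p)
    (hmul : ∀ p q : P, ρ (p * q) = ρ p * ρ q)
    (hone : ρ 1 = 1)
    (ω : H →ₗ[k] P ⊗[k] P)
    (hAd : ∀ h : H, rhoTwo ρ (ω h) = ω.rTensor H (adCoaction h)) :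
    (∀ h : H,
      (TensorProduct.assoc k H P P) ((deltaL Sinv ρ).rTensor P (ω h))
        = h ⊗ₜ[k] ((1 : P) ⊗ₜ[k] (1 : P))
            - (Coalgebra.counit (R := k) h) • ((1 : H) ⊗ₜ[k] ((1 : P) ⊗ₜ[k] (1 : P)))
          + ω.lTensor H (Coalgebra.comul (R := k) h))
    ↔ (∀ h : H,
      ρ.lTensor P (ω h)
        = (1 : P) ⊗ₜ[k] ((1 : P) ⊗ₜ[k] h)
            - (Coalgebra.counit (R := k) h) • ((1 : P) ⊗ₜ[k] ((1 : P) ⊗ₜ[k] (1 : H)))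
          + (TensorProduct.assoc k P P H) (ω.rTensor H (Coalgebra.comul (R := k) h))) := by
  constructor
  · intro hii h
    exact forward_direction Sinv hS1 hS2 ρ hcoassoc hcounit hone ω hAd hii h
  · intro hiii h
    exact backward_direction Sinv hS2 ρ hcoassoc hcounit hone ω hAd hiii h

end AuxHopf
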